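/- Let A be a commutative algebra and I an abstract continuity ideal in A. Then there is no strictly decreasing infinite sequence P_1 ⊋ P_2 ⊋ ⋯ of prime ideals of the form P_n = (I : f_n) for f_n ∈ A. Consequently, every prime ideal of the form (I : f) contains a minimal one among all such primes. -/

import Mathlib

/-- The quotient ideal `(J : a) = {x | a * x ∈ J}`. -/
def quotIdeal {A : Type*} [CommRing A] (J : Ideal A) (a : A) : Ideal A where
  carrier := {x | a * x ∈ J}
  zero_mem' := by simp
  add_mem' := by
    intro x y hx hy
    simpa [mul_add] using J.add_mem hx hy
  smul_mem' := by
    intro c x hx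
    simp only [smul_eq_mul, Set.mem_setOf_eq, mul_left_comm a c x] at *
    exact J.mul_mem_left c hx

/-- An ideal `I` is an abstract continuity ideal if for every sequence
`(a n)` the increasing chain of quotient ideals eventually stabilizes. -/
def AbstractContinuityIdeal {A : Type*} [CommRing A] (I : Ideal A) : Prop :=
  ∀ a : ℕ → A, ∃ n₀ : ℕ, ∀ n ≥ n₀,
    quotIdeal I (∏ i ∈ Finset.range n, a i) =
      quotIdeal I (∏ i ∈ Finset.range (n + 1), a i)

/-!
If the primes `Pₙ = (I : fₙ)` strictly decrease, choose `aₙ ∈ Pₙ \ Pₙ₊₁` and put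
`cₙ = a₀ ⋯ aₙ₋₁`. Then `fₙ` kills `cₙ₊₁ = cₙ aₙ` modulo `I` because `aₙ ∈ Pₙ`, but not `cₙ`,
because `Pₙ` is prime and contains none of the `aᵢ` with `i < n`. So
`fₙ ∈ (I : cₙ₊₁) \ (I : cₙ)` for every `n`, and the chain `(I : cₙ)` never stabilizes.
Minimal primes then exist by well-foundedness.
-/

theorem Set.IsWF.exists_minimal_le {α : Type*} [Preorder α] {s : Set α} {a : α}
    (hs : s.IsWF) (ha : a ∈ s) : ∃ b ≤ a, Minimal (· ∈ s) b := by
  obtain ⟨b, hb⟩ := (hs.mono Set.inter_subset_left : (s ∩ Set.Iic a).IsWF).exists_minimal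
    ⟨a, ha, le_rfl⟩
  exact ⟨b, hb.prop.2, hb.prop.1, fun c hc hcb => hb.le_of_le ⟨hc, hcb.trans hb.prop.2⟩ hcb⟩

section QuotIdeal

variable {A : Type*} [CommRing A] {I : Ideal A}

@[simp]
lemma mem_quotIdeal {a x : A} : x ∈ quotIdeal I a ↔ a * x ∈ I := Iff.rfl

lemma mem_quotIdeal_comm {a x : A} : x ∈ quotIdeal I a ↔ a ∈ quotIdeal I x := by
  simp only [mem_quotIdeal, mul_comm]

lemma quotIdeal_le_quotIdeal_mul_left (a b : A) : quotIdeal I b ≤ quotIdeal I (a * b) :=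
  fun x hx => by simpa only [mem_quotIdeal, mul_assoc] using I.mul_mem_left a hx

variable (I) in
def primeQuotIdeals : Set (Ideal A) := {P | P.IsPrime ∧ ∃ g, quotIdeal I g = P}

theorem AbstractContinuityIdeal.not_strictAnti_quotIdeal (hI : AbstractContinuityIdeal I)
    (f : ℕ → A) (hf : ∀ n, (quotIdeal I (f n)).IsPrime) :
    ¬ StrictAnti (fun n => quotIdeal I (f n)) := by
  intro hanti
  choose a ha_mem ha_not_mem using fun n : ℕ => SetLike.exists_of_lt (hanti n.lt_succ_self)
  obtain ⟨n, hn⟩ := hI a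
  have h_kills : f n ∈ quotIdeal I (∏ i ∈ Finset.range (n + 1), a i) := by
    rw [Finset.prod_range_succ]
    exact quotIdeal_le_quotIdeal_mul_left _ _ (mem_quotIdeal_comm.1 (ha_mem n))
  have h_not_kills : f n ∉ quotIdeal I (∏ i ∈ Finset.range n, a i) := by
    rw [mem_quotIdeal_comm, (hf n).prod_mem_iff]
    rintro ⟨i, hi, hai⟩
    exact ha_not_mem i (hanti.antitone (Finset.mem_range.1 hi) hai)
  exact h_not_kills (hn n le_rfl ▸ h_kills)

theorem AbstractContinuityIdeal.isWF_primeQuotIdeals (hI : AbstractContinuityIdeal I) :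
    (primeQuotIdeals I).IsWF := by
  refine Set.isWF_iff_no_descending_seq.2 fun P hP hmem => ?_
  choose g hg using fun n => (hmem n).2
  refine hI.not_strictAnti_quotIdeal g (fun n => hg n ▸ (hmem n).1) ?_
  simpa only [hg] using hP

end QuotIdeal

/-- For an abstract continuity ideal `I`, there is no strictly decreasing
infinite sequence of prime ideals of the form `(I : f)`; consequently every
prime of the form `(I : f)` contains a minimal one among such primes. -/
theorem no_strictly_decreasing_and_minimal_exists {A : Type*} [CommRing A]
    (I : Ideal A) (hI : AbstractContinuityIdeal I) :
    (¬ ∃ f : ℕ → A, (∀ n, (quotIdeal I (f n)).IsPrime) ∧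
        ∀ n, quotIdeal I (f (n + 1)) < quotIdeal I (f n)) ∧
      (∀ f : A, (quotIdeal I f).IsPrime →
        ∃ g : A, (quotIdeal I g).IsPrime ∧ quotIdeal I g ≤ quotIdeal I f ∧
          ∀ h : A, (quotIdeal I h).IsPrime →
            quotIdeal I h ≤ quotIdeal I g → quotIdeal I h = quotIdeal I g) := by
  refine ⟨fun ⟨f, hprime, hlt⟩ => hI.not_strictAnti_quotIdeal f hprime
    (strictAnti_nat_of_succ_lt hlt), fun f hf => ?_⟩
  obtain ⟨P, hPf, ⟨hP, g, rfl⟩, hmin⟩ := hI.isWF_primeQuotIdeals.exists_minimal_le ⟨hf, f, rfl⟩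
  exact ⟨g, hP, hPf, fun h hh hle => le_antisymm hle (hmin ⟨hh, h, rfl⟩ hle)⟩
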